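/- Fix an integer m ≥ 1. The sequence a(n) = n - ⌊(m-2+√((m-2)² + 8m(n-1)))/(2m)⌋ satisfies a(1) = 1 and the nested recurrence a(n+1) = n - a^{(m)}(n) + a^{(m+1)}(n) for all n ≥ 1. -/

import Mathlib

/-!
Let `N k = 1 + k + m k (k - 1) / 2` and call `[N k, N (k + 1))`, an interval of length `m k + 1`,
the `k`-th block. The number `x_n` inside the floor is the positive root of
`m x² - (m - 2) x = 2 (n - 1)`, and `m k² - (m - 2) k = 2 (N k - 1)`, so `⌊x_n⌋ = k` exactly on
the `k`-th block and there `a n = n - k`.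

Since `a^{(m+1)}(n) = a^{(m)}(n) - j` when `a^{(m)}(n)` lies in block `j`, the recurrence says
that `a^{(m)}(n)` lies in the block just below that of `n + 1`. This is checked by following the
orbit of `n`: `a` moves down by `k + 1` inside block `k + 1`, and one step out of it lands at the
top of block `k`, in which the remaining steps move down by `k`.
-/

open Set

lemma le_quadratic_root {a b c y : ℝ} (ha : 0 < a) (h : a * y ^ 2 - b * y ≤ c) :
    y ≤ (b + √(b ^ 2 + 4 * a * c)) / (2 * a) := by
  rw [le_div_iff₀ (by positivity)]
  rcases le_or_gt (2 * a * y - b) 0 with hy | hy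
  · linarith [Real.sqrt_nonneg (b ^ 2 + 4 * a * c)]
  · have : 2 * a * y - b ≤ √(b ^ 2 + 4 * a * c) := by
      rw [Real.le_sqrt' hy]
      nlinarith
    linarith

lemma quadratic_root_lt {a b c y : ℝ} (ha : 0 < a) (hy : b < 2 * a * y)
    (h : c < a * y ^ 2 - b * y) : (b + √(b ^ 2 + 4 * a * c)) / (2 * a) < y := by
  rw [div_lt_iff₀ (by positivity)]
  have : √(b ^ 2 + 4 * a * c) < 2 * a * y - b := by
    rw [Real.sqrt_lt' (by linarith)]
    nlinarith
  linarith

lemma floor_quadratic_root_eq {a b c : ℝ} {k : ℤ} (ha : 0 < a) (hb : b < 2 * a * (k + 1))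
    (hk : a * k ^ 2 - b * k ≤ c) (hk' : c < a * (k + 1) ^ 2 - b * (k + 1)) :
    ⌊(b + √(b ^ 2 + 4 * a * c)) / (2 * a)⌋ = k := by
  rw [Int.floor_eq_iff]
  exact ⟨le_quadratic_root ha hk, by exact_mod_cast quadratic_root_lt ha hb hk'⟩

def blockStart (m : ℕ) : ℕ → ℕ
  | 0 => 1
  | k + 1 => blockStart m k + m * k + 1

def block (m k : ℕ) : Set ℕ := Ico (blockStart m k) (blockStart m (k + 1))

lemma blockStart_succ (m k : ℕ) : blockStart m (k + 1) = blockStart m k + m * k + 1 := rfl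

lemma block_zero (m : ℕ) : block m 0 = {1} := by
  ext n
  simp only [block, blockStart, mem_Ico, mem_singleton_iff]
  omega

lemma lt_blockStart (m k : ℕ) : k < blockStart m k := by
  induction k with
  | zero => simp [blockStart]
  | succ k ih => rw [blockStart_succ]; omega

lemma two_mul_blockStart (m k : ℕ) : 2 * blockStart m k + m * k = m * k ^ 2 + 2 * k + 2 := by
  induction k with
  | zero => simp [blockStart]
  | succ k ih => rw [blockStart_succ]; ring_nf at ih ⊢; omega

lemma exists_mem_block (m : ℕ) {n : ℕ} (hn : 1 ≤ n) : ∃ k, n ∈ block m k := by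
  induction n, hn using Nat.le_induction with
  | base => exact ⟨0, by simp [block_zero]⟩
  | succ n _ ih =>
    obtain ⟨k, hk₀, hk₁⟩ := ih
    rcases (Nat.succ_le_of_lt hk₁).lt_or_eq with h | h
    · exact ⟨k, by omega, h⟩
    · exact ⟨k + 1, h.ge, by rw [blockStart_succ (k := k + 1)]; omega⟩

lemma floor_eq_of_mem_block {m k n : ℕ} (hm : 1 ≤ m) (hn : n ∈ block m k) :
    ⌊(((m : ℝ) - 2) + √(((m : ℝ) - 2) ^ 2 + 8 * m * ((n : ℝ) - 1))) / (2 * m)⌋ = k := by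
  obtain ⟨hk₀, hk₁⟩ := hn
  have e₀ : (2 * blockStart m k + m * k : ℝ) = m * k ^ 2 + 2 * k + 2 := by
    exact_mod_cast two_mul_blockStart m k
  have e₁ : (2 * blockStart m (k + 1) + m * (k + 1) : ℝ) = m * (k + 1) ^ 2 + 2 * (k + 1) + 2 := by
    exact_mod_cast two_mul_blockStart m (k + 1)
  have h₀ : (blockStart m k : ℝ) ≤ n := by exact_mod_cast hk₀
  have h₁ : (n : ℝ) + 1 ≤ blockStart m (k + 1) := by exact_mod_cast hk₁
  have hm' : (1 : ℝ) ≤ m := by exact_mod_cast hm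
  have hk : (k : ℝ) = ((k : ℤ) : ℝ) := rfl
  rw [show 8 * (m : ℝ) * (n - 1) = 4 * m * (2 * (n - 1)) by ring]
  exact floor_quadratic_root_eq (by linarith) (by rw [← hk]; nlinarith)
    (by rw [← hk]; linarith) (by rw [← hk]; linarith)

lemma iterate_eq_sub_mul {f : ℕ → ℕ} {L U d : ℕ} (hf : ∀ x ∈ Ico L U, f x = x - d) {j n : ℕ}
    (hn : L + j * d ≤ n) (hU : n < U) : f^[j] n = n - j * d := by
  induction j with
  | zero => simp
  | succ j ih =>
    have e : (j + 1) * d = j * d + d := add_one_mul j d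
    rw [Function.iterate_succ_apply', ih (by omega), hf _ ⟨by omega, by omega⟩, e]
    omega

lemma iterate_mem_block_of_succ_mem {m k n : ℕ} {a : ℕ → ℕ}
    (ha : ∀ k n, n ∈ block m k → a n = n - k) (hn : n + 1 ∈ block m (k + 1)) :
    a^[m] n ∈ block m k := by
  obtain ⟨hn₀, hn₁⟩ := hn
  have hN₁ := blockStart_succ m k
  have hN₂ := blockStart_succ m (k + 1)
  have hmk := mul_add_one m k
  rcases hn₀.lt_or_eq with hlt | htop
  · -- `n` lies in block `k + 1`: write `n = N (k + 1) + q (k + 1) + s` with `s ≤ k`, `q < m`.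
    obtain ⟨q, s, hs, rfl⟩ : ∃ q s, s < k + 1 ∧ n = blockStart m (k + 1) + (q * (k + 1) + s) :=
      ⟨(n - blockStart m (k + 1)) / (k + 1), (n - blockStart m (k + 1)) % (k + 1),
        Nat.mod_lt _ k.succ_pos, by rw [Nat.div_add_mod']; omega⟩
    have hqk := mul_add_one q k
    have hq : q < m := by
      by_contra! hq
      have := Nat.mul_le_mul_right (k + 1) hq
      omega
    have hsplit : (m - 1 - q) * k + q * k + k = m * k := by
      rw [← add_mul, ← add_one_mul]; congr 1; omega
    have hfirst : a^[q + 1] (blockStart m (k + 1) + (q * (k + 1) + s))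
        = blockStart m k + ((m - 1 - q) * k + q * k + s) := by
      rw [Function.iterate_succ_apply', iterate_eq_sub_mul (ha (k + 1)) (by omega) (by omega),
        ha (k + 1) _ ⟨by omega, by omega⟩]
      omega
    have hrest := iterate_eq_sub_mul (f := a) (ha k) (j := m - 1 - q)
      (n := blockStart m k + ((m - 1 - q) * k + q * k + s)) (by omega) (by omega)
    have hsteps : a^[m] = a^[m - 1 - q] ∘ a^[q + 1] := by
      rw [← Function.iterate_add]; congr 1; omega
    rw [hsteps, Function.comp_apply, hfirst, hrest]
    constructor <;> omega
  · -- `n` is the top of block `k`, which the `m` steps of size `k` bring down to its bottom.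
    rw [iterate_eq_sub_mul (ha k) (by omega) (by omega)]
    constructor <;> omega

/-- The explicit sequence `a(n) = n - ⌊(m-2+√((m-2)²+8m(n-1)))/(2m)⌋` satisfies
`a(1) = 1` and the nested recurrence `a(n+1) = n - a^{(m)}(n) + a^{(m+1)}(n)`. -/
theorem explicit_solution_satisfies (m : ℕ) (hm : 1 ≤ m) (a : ℕ → ℕ)
    (ha : ∀ n : ℕ, (a n : ℤ) = n -
      ⌊(((m : ℝ) - 2) + Real.sqrt (((m : ℝ) - 2) ^ 2 + 8 * m * ((n : ℝ) - 1))) / (2 * m)⌋) :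
    a 1 = 1 ∧ ∀ n : ℕ, 1 ≤ n →
      (a (n + 1) : ℤ) = n - a^[m] n + a^[m + 1] n := by
  have hblock : ∀ k n, n ∈ block m k → a n = n - k := fun k n hn => by
    have h := ha n
    rw [floor_eq_of_mem_block hm hn] at h
    have hkn : k < n := (lt_blockStart m k).trans_le hn.1
    omega
  refine ⟨hblock 0 1 (by simp [block_zero]), fun n hn => ?_⟩
  obtain ⟨_ | k, hk⟩ := exists_mem_block m (Nat.le_add_left 1 n)
  · rw [block_zero, mem_singleton_iff] at hk
    omega
  have hiter := iterate_mem_block_of_succ_mem hblock hk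
  have hk_lt_iter : k < a^[m] n := (lt_blockStart m k).trans_le hiter.1
  have hk_lt : k + 1 < n + 1 := (lt_blockStart m (k + 1)).trans_le hk.1
  rw [Function.iterate_succ_apply', hblock _ _ hiter, hblock _ _ hk]
  omega
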